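/- arXiv:2112.12338 — 8 statements merged into one kernel-verified Lean document; each statement's English description precedes it below -/
import Mathlib

section
/- Let μ be a σ-finite measure on a measurable space Ω and let f, g : Ω → [0,∞) be measurable with ∫ f dμ = ∫ g dμ = 1. Fix q, θ ∈ (0,1), and define the MAP decision regions D_1 = {ω : q·f(ω) ≥ (1−q)·g(ω)} (decide H_1) and D_2 = {ω : q·f(ω) < (1−q)·g(ω)} (decide H_2), the probability of error P_error(q, θ) = θ·∫_{D_2} f dμ + (1−θ)·∫_{D_1} g dμ, and the Bhattacharyya coefficient B = ∫ √(f·g) dμ. Then (1/2)·min{θ, 1−θ}·B² ≤ P_error(q, θ) ≤ max{√((1−q)/q)·θ, √(q/(1−q))·(1−θ)}·B. -/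
/-!
On `D = {q f < (1 - q) g}`, where the MAP rule decides `H₂`, one has `f ≤ √((1 - q) / q) √(f g)`,
and on `Dᶜ` one has `g ≤ √(q / (1 - q)) √(f g)`; integrating gives the upper bound.
For the lower bound write `√(f g) = √(min f g · max f g)`: Cauchy–Schwarz and
`∫ max f g = 2 - ∫ min f g ≤ 2` give `B² ≤ 2 ∫ min f g`, and `min f g` is dominated by `f` on `D`
and by `g` on `Dᶜ`.
-/

open MeasureTheory

namespace Real

theorem le_sqrt_div_mul_sqrt_mul {a b p r : ℝ} (ha : 0 ≤ a) (hb : 0 ≤ b) (hp : 0 < p)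
    (h : p * a ≤ r * b) : a ≤ √(r / p) * √(a * b) := by
  have hsq : a * a ≤ r / p * (a * b) := by
    rw [div_mul_eq_mul_div, le_div_iff₀ hp]
    nlinarith
  calc a = √(a * a) := (sqrt_mul_self ha).symm
    _ ≤ √(r / p * (a * b)) := sqrt_le_sqrt hsq
    _ = √(r / p) * √(a * b) := sqrt_mul' _ (mul_nonneg ha hb)

end Real

section

variable {Ω : Type*} [MeasurableSpace Ω] {μ : Measure Ω} {f g : Ω → ℝ}

theorem memLp_two_sqrt {u : Ω → ℝ} (hu0 : 0 ≤ u) (hu : Integrable u μ) :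
    MemLp (fun ω => √(u ω)) 2 μ := by
  rw [memLp_two_iff_integrable_sq (Real.continuous_sqrt.comp_aestronglyMeasurable hu.1)]
  simpa only [Real.sq_sqrt (hu0 _)] using hu

theorem integrable_sqrt_mul (hf0 : 0 ≤ f) (hg0 : 0 ≤ g) (hf : Integrable f μ)
    (hg : Integrable g μ) : Integrable (fun ω => √(f ω * g ω)) μ := by
  refine ((memLp_two_sqrt hf0 hf).integrable_mul (memLp_two_sqrt hg0 hg)).congr
    (.of_forall fun ω => ?_)
  exact (Real.sqrt_mul (hf0 ω) _).symm

theorem sq_integral_sqrt_mul_le_integral_mul_integral (hf0 : 0 ≤ f) (hg0 : 0 ≤ g)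
    (hf : Integrable f μ) (hg : Integrable g μ) :
    (∫ ω, √(f ω * g ω) ∂μ) ^ 2 ≤ (∫ ω, f ω ∂μ) * ∫ ω, g ω ∂μ := by
  have hHolder := integral_mul_le_Lp_mul_Lq_of_nonneg Real.HolderConjugate.two_two
    (.of_forall fun ω => Real.sqrt_nonneg (f ω)) (.of_forall fun ω => Real.sqrt_nonneg (g ω))
    (by simpa using memLp_two_sqrt hf0 hf) (by simpa using memLp_two_sqrt hg0 hg)
  simp only [Real.rpow_two, Real.sq_sqrt (hf0 _), Real.sq_sqrt (hg0 _),
    ← Real.sqrt_eq_rpow, ← Real.sqrt_mul (hf0 _)] at hHolder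
  calc (∫ ω, √(f ω * g ω) ∂μ) ^ 2 ≤ (√(∫ ω, f ω ∂μ) * √(∫ ω, g ω ∂μ)) ^ 2 :=
        pow_le_pow_left₀ (integral_nonneg fun ω => Real.sqrt_nonneg _) hHolder 2
    _ = (∫ ω, f ω ∂μ) * ∫ ω, g ω ∂μ := by
        rw [mul_pow, Real.sq_sqrt (integral_nonneg hf0), Real.sq_sqrt (integral_nonneg hg0)]

theorem sq_integral_sqrt_mul_le_two_mul_integral_min (hf0 : 0 ≤ f) (hg0 : 0 ≤ g)
    (hfi : ∫ ω, f ω ∂μ = 1) (hgi : ∫ ω, g ω ∂μ = 1) :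
    (∫ ω, √(f ω * g ω) ∂μ) ^ 2 ≤ 2 * ∫ ω, min (f ω) (g ω) ∂μ := by
  have hf : Integrable f μ := .of_integral_ne_zero (by simp [hfi])
  have hg : Integrable g μ := .of_integral_ne_zero (by simp [hgi])
  have hmin_int : Integrable (fun ω => min (f ω) (g ω)) μ := hf.inf hg
  have hmax_int : Integrable (fun ω => max (f ω) (g ω)) μ := hf.sup hg
  have hmin_nonneg : 0 ≤ ∫ ω, min (f ω) (g ω) ∂μ :=
    integral_nonneg fun ω => le_min (hf0 ω) (hg0 ω)
  have hmax_eq : ∫ ω, max (f ω) (g ω) ∂μ = 2 - ∫ ω, min (f ω) (g ω) ∂μ := by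
    rw [eq_sub_iff_add_eq, ← integral_add hmax_int hmin_int]
    simp only [max_add_min]
    rw [integral_add hf hg, hfi, hgi, one_add_one_eq_two]
  calc (∫ ω, √(f ω * g ω) ∂μ) ^ 2
      = (∫ ω, √(min (f ω) (g ω) * max (f ω) (g ω)) ∂μ) ^ 2 := by simp only [min_mul_max]
    _ ≤ (∫ ω, min (f ω) (g ω) ∂μ) * ∫ ω, max (f ω) (g ω) ∂μ :=
        sq_integral_sqrt_mul_le_integral_mul_integral (fun ω => le_min (hf0 ω) (hg0 ω))
          (fun ω => (hf0 ω).trans (le_max_left _ _)) hmin_int hmax_int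
    _ ≤ 2 * ∫ ω, min (f ω) (g ω) ∂μ := by rw [hmax_eq]; nlinarith

theorem integral_min_le_setIntegral_add_setIntegral_compl {D : Set Ω} (hD : MeasurableSet D)
    (hf : Integrable f μ) (hg : Integrable g μ) :
    ∫ ω, min (f ω) (g ω) ∂μ ≤ (∫ ω in D, f ω ∂μ) + ∫ ω in Dᶜ, g ω ∂μ := by
  have hmin_int : Integrable (fun ω => min (f ω) (g ω)) μ := hf.inf hg
  rw [← integral_add_compl hD hmin_int]
  exact add_le_add
    (setIntegral_mono_on hmin_int.integrableOn hf.integrableOn hD fun _ _ => min_le_left _ _)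
    (setIntegral_mono_on hmin_int.integrableOn hg.integrableOn hD.compl
      fun _ _ => min_le_right _ _)

theorem setIntegral_le_const_mul_setIntegral {s : Ω → ℝ} {D : Set Ω} {c : ℝ}
    (hD : MeasurableSet D) (hf : Integrable f μ) (hs : Integrable s μ)
    (hfs : ∀ ω ∈ D, f ω ≤ c * s ω) :
    ∫ ω in D, f ω ∂μ ≤ c * ∫ ω in D, s ω ∂μ := by
  rw [← integral_const_mul]
  exact setIntegral_mono_on hf.integrableOn (hs.const_mul c).integrableOn hD hfs

theorem mul_setIntegral_add_mul_setIntegral_compl_le {s : Ω → ℝ} {D : Set Ω} {a b c d : ℝ}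
    (hD : MeasurableSet D) (hf : Integrable f μ) (hg : Integrable g μ) (hs0 : 0 ≤ s)
    (hs : Integrable s μ) (ha : 0 ≤ a) (hb : 0 ≤ b)
    (hfs : ∀ ω ∈ D, f ω ≤ c * s ω) (hgs : ∀ ω ∈ Dᶜ, g ω ≤ d * s ω) :
    a * (∫ ω in D, f ω ∂μ) + b * ∫ ω in Dᶜ, g ω ∂μ ≤ max (c * a) (d * b) * ∫ ω, s ω ∂μ := by
  have hsD : 0 ≤ ∫ ω in D, s ω ∂μ := setIntegral_nonneg hD fun ω _ => hs0 ω
  have hsDc : 0 ≤ ∫ ω in Dᶜ, s ω ∂μ := setIntegral_nonneg hD.compl fun ω _ => hs0 ω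
  calc a * (∫ ω in D, f ω ∂μ) + b * ∫ ω in Dᶜ, g ω ∂μ
      ≤ a * (c * ∫ ω in D, s ω ∂μ) + b * (d * ∫ ω in Dᶜ, s ω ∂μ) := by
        gcongr
        exacts [setIntegral_le_const_mul_setIntegral hD hf hs hfs,
          setIntegral_le_const_mul_setIntegral hD.compl hg hs hgs]
    _ = (c * a) * (∫ ω in D, s ω ∂μ) + (d * b) * ∫ ω in Dᶜ, s ω ∂μ := by ring
    _ ≤ max (c * a) (d * b) * (∫ ω in D, s ω ∂μ)
          + max (c * a) (d * b) * ∫ ω in Dᶜ, s ω ∂μ := by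
        gcongr
        exacts [le_max_left _ _, le_max_right _ _]
    _ = max (c * a) (d * b) * ∫ ω, s ω ∂μ := by rw [← mul_add, integral_add_compl hD hs]

end

theorem MAP_error_bhattacharyya_bounds_general
    {Ω : Type*} [MeasurableSpace Ω] (μ : Measure Ω)
    (f g : Ω → ℝ) (hf : Measurable f) (hg : Measurable g)
    (hf0 : ∀ ω, 0 ≤ f ω) (hg0 : ∀ ω, 0 ≤ g ω)
    (hfi : ∫ ω, f ω ∂μ = 1) (hgi : ∫ ω, g ω ∂μ = 1)
    (q θ : ℝ) (hq0 : 0 < q) (hq1 : q < 1) (hθ0 : 0 < θ) (hθ1 : θ < 1) :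
    (1 / 2) * min θ (1 - θ) * (∫ ω, Real.sqrt (f ω * g ω) ∂μ) ^ 2
        ≤ θ * (∫ ω in {ω | q * f ω < (1 - q) * g ω}, f ω ∂μ)
          + (1 - θ) * (∫ ω in {ω | q * f ω ≥ (1 - q) * g ω}, g ω ∂μ)
      ∧ θ * (∫ ω in {ω | q * f ω < (1 - q) * g ω}, f ω ∂μ)
          + (1 - θ) * (∫ ω in {ω | q * f ω ≥ (1 - q) * g ω}, g ω ∂μ)
        ≤ max (Real.sqrt ((1 - q) / q) * θ) (Real.sqrt (q / (1 - q)) * (1 - θ))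
            * ∫ ω, Real.sqrt (f ω * g ω) ∂μ := by
  set D := {ω | q * f ω < (1 - q) * g ω}
  have hD : MeasurableSet D := measurableSet_lt (hf.const_mul q) (hg.const_mul (1 - q))
  have hDc : {ω | q * f ω ≥ (1 - q) * g ω} = Dᶜ := by ext ω; simp [D]
  rw [hDc]
  have hfint : Integrable f μ := .of_integral_ne_zero (by simp [hfi])
  have hgint : Integrable g μ := .of_integral_ne_zero (by simp [hgi])
  have hmin_pos : 0 < min θ (1 - θ) := lt_min hθ0 (by linarith)
  constructor
  · calc (1 / 2) * min θ (1 - θ) * (∫ ω, √(f ω * g ω) ∂μ) ^ 2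
        ≤ (1 / 2) * min θ (1 - θ) * (2 * ∫ ω, min (f ω) (g ω) ∂μ) := by
          gcongr; exact sq_integral_sqrt_mul_le_two_mul_integral_min hf0 hg0 hfi hgi
      _ = min θ (1 - θ) * ∫ ω, min (f ω) (g ω) ∂μ := by ring
      _ ≤ min θ (1 - θ) * ((∫ ω in D, f ω ∂μ) + ∫ ω in Dᶜ, g ω ∂μ) := by
          gcongr; exact integral_min_le_setIntegral_add_setIntegral_compl hD hfint hgint
      _ ≤ θ * (∫ ω in D, f ω ∂μ) + (1 - θ) * ∫ ω in Dᶜ, g ω ∂μ := by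
          have hfD : 0 ≤ ∫ ω in D, f ω ∂μ := setIntegral_nonneg hD fun ω _ => hf0 ω
          have hgDc : 0 ≤ ∫ ω in Dᶜ, g ω ∂μ := setIntegral_nonneg hD.compl fun ω _ => hg0 ω
          rw [mul_add]
          gcongr
          exacts [min_le_left _ _, min_le_right _ _]
  · refine mul_setIntegral_add_mul_setIntegral_compl_le hD hfint hgint
      (fun ω => Real.sqrt_nonneg _) (integrable_sqrt_mul hf0 hg0 hfint hgint) hθ0.le
      (by linarith) ?_ ?_
    · exact fun ω hω => Real.le_sqrt_div_mul_sqrt_mul (hf0 ω) (hg0 ω) hq0 hω.le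
    · intro ω hω
      rw [mul_comm (f ω)]
      exact Real.le_sqrt_div_mul_sqrt_mul (hg0 ω) (hf0 ω) (by linarith) (not_lt.mp hω)

/-- **Bounds on the probability of error for the MAP rule (binary case).**
Let `μ` be a σ-finite measure, `f, g` nonnegative measurable densities integrating to `1`,
and `q, θ ∈ (0,1)`. With the MAP decision regions `D₁ = {q·f ≥ (1−q)·g}` and
`D₂ = {q·f < (1−q)·g}`, the probability of error
`P_error = θ·∫_{D₂} f + (1−θ)·∫_{D₁} g` satisfies
`(1/2)·min{θ,1−θ}·B² ≤ P_error ≤ max{√((1−q)/q)·θ, √(q/(1−q))·(1−θ)}·B`,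
where `B = ∫ √(f·g)` is the Bhattacharyya coefficient. -/
theorem MAP_error_bhattacharyya_bounds
    {Ω : Type*} [MeasurableSpace Ω] (μ : Measure Ω) [SigmaFinite μ]
    (f g : Ω → ℝ) (hf : Measurable f) (hg : Measurable g)
    (hf0 : ∀ ω, 0 ≤ f ω) (hg0 : ∀ ω, 0 ≤ g ω)
    (hfi : ∫ ω, f ω ∂μ = 1) (hgi : ∫ ω, g ω ∂μ = 1)
    (q θ : ℝ) (hq0 : 0 < q) (hq1 : q < 1) (hθ0 : 0 < θ) (hθ1 : θ < 1) :
    (1 / 2) * min θ (1 - θ) * (∫ ω, Real.sqrt (f ω * g ω) ∂μ) ^ 2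
        ≤ θ * (∫ ω in {ω | q * f ω < (1 - q) * g ω}, f ω ∂μ)
          + (1 - θ) * (∫ ω in {ω | q * f ω ≥ (1 - q) * g ω}, g ω ∂μ)
      ∧ θ * (∫ ω in {ω | q * f ω < (1 - q) * g ω}, f ω ∂μ)
          + (1 - θ) * (∫ ω in {ω | q * f ω ≥ (1 - q) * g ω}, g ω ∂μ)
        ≤ max (Real.sqrt ((1 - q) / q) * θ) (Real.sqrt (q / (1 - q)) * (1 - θ))
            * ∫ ω, Real.sqrt (f ω * g ω) ∂μ :=
  MAP_error_bhattacharyya_bounds_general μ f g hf hg hf0 hg0 hfi hgi q θ hq0 hq1 hθ0 hθ1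
end

section
/- For any binary MMDP M = {M_1, M_2}, any policy π, and any t ∈ ℕ, the strict inequality B(t+1, π) < B(t, π) holds if and only if there exist a history h_t ∈ H_t with P_1^π(h_t)·P_2^π(h_t) > 0 and an action a ∈ A_{h_t(t)} with π_t(a|h_t) > 0 such that δ_1(·|h_t(t), a) ≠ δ_2(·|h_t(t), a). -/
open Finset Filter

/-- A history of length `t` of an MDP with states `S` and actions `A`:
a sequence of `t+1` states and `t` actions `(s₀, a₀, s₁, …, a_{t-1}, s_t)`. -/
abbrev Hist (S A : Type) (t : ℕ) : Type := (Fin (t + 1) → S) × (Fin t → A)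

/-- The last state of a history. -/
def lastState {S A : Type} {t : ℕ} (h : Hist S A t) : S := h.1 (Fin.last t)

/-- The length-`τ` prefix of a history of length `t` (for `τ < t`). -/
def prefixH {S A : Type} {t : ℕ} (h : Hist S A t) (τ : Fin t) : Hist S A τ.val :=
  (fun i => h.1 (Fin.castLE (Nat.succ_le_succ τ.isLt.le) i),
   fun i => h.2 (Fin.castLE τ.isLt.le i))

/-- A history-dependent randomized policy over the available-action map `act`:
for every time `t` and history `h` of length `t` it gives a probability
distribution over the actions available at the last state of `h`. -/
structure Policy (S A : Type) [Fintype S] [Fintype A] (act : S → Finset A) where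
  p : (t : ℕ) → Hist S A t → A → ℝ
  nonneg : ∀ (t : ℕ) (h : Hist S A t) (a : A), 0 ≤ p t h a
  sum_one : ∀ (t : ℕ) (h : Hist S A t), ∑ a ∈ act (lastState h), p t h a = 1
  zero_off : ∀ (t : ℕ) (h : Hist S A t), ∀ a ∉ act (lastState h), p t h a = 0

/-- The probability `P^π(h)` of a history `h` of length `t` under the transition kernel `δ`
    and (the underlying map `πf` of) a policy, starting from the initial state `init`. -/
noncomputable def histProb {S A : Type} [Fintype S] [Fintype A] [DecidableEq S]
    (init : S) (δ : S → A → S → ℝ)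
    (πf : (t : ℕ) → Hist S A t → A → ℝ) (t : ℕ) (h : Hist S A t) : ℝ :=
  (if h.1 0 = init then (1 : ℝ) else 0) *
    ∏ τ : Fin t,
      πf τ.val (prefixH h τ) (h.2 τ) * δ (h.1 τ.castSucc) (h.2 τ) (h.1 τ.succ)

/-- The Bhattacharyya coefficient at step `t` between the history distributions induced by
the kernels `δ1` and `δ2` under the policy map `πf`:
`B(t,π) = Σ_{h_t} √(P₁^π(h_t)·P₂^π(h_t))`. -/
noncomputable def BC {S A : Type} [Fintype S] [Fintype A] [DecidableEq S]
    (init : S) (δ1 δ2 : S → A → S → ℝ)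
    (πf : (t : ℕ) → Hist S A t → A → ℝ) (t : ℕ) : ℝ :=
  ∑ h : Hist S A t,
    Real.sqrt (histProb init δ1 πf t h * histProb init δ2 πf t h)

/-- A binary MMDP: two MDPs sharing the state space `S`, available actions `act`,
and initial state `init`, with transition kernels `δ 0` and `δ 1`. -/
structure BinMMDP (S A : Type) [Fintype S] [Fintype A] where
  act : S → Finset A
  act_nonempty : ∀ s, (act s).Nonempty
  init : S
  δ : Fin 2 → S → A → S → ℝ
  δ_nonneg : ∀ i s a s', 0 ≤ δ i s a s'
  δ_sum : ∀ i s, ∀ a ∈ act s, ∑ s', δ i s a s' = 1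

/-!
Extending a history `h` by an action `a` and a next state `s` multiplies each path probability
by `π(a|h)` times the corresponding transition probability. Hence
`B(t) - B(t+1) = Σ_h √(P₁(h) P₂(h)) Σ_a π(a|h) H²(δ₁(·|h(t),a), δ₂(·|h(t),a))`, where
`H²(p, q) = 1 - Σ_s √(p s q s) = ½ Σ_s (√(p s) - √(q s))²` is the squared Hellinger distance of
two distributions. All terms are nonnegative, so the difference is positive iff one term is,
and `H²(p, q)` vanishes exactly when `p = q`.
-/

lemma mul_pos_iff_of_nonneg {a b : ℝ} (ha : 0 ≤ a) (hb : 0 ≤ b) :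
    0 < a * b ↔ 0 < a ∧ 0 < b :=
  ⟨fun h => ⟨pos_of_mul_pos_left h hb, pos_of_mul_pos_right h ha⟩, fun h => mul_pos h.1 h.2⟩

section Hellinger

variable {S : Type} [Fintype S] {p q : S → ℝ}

noncomputable def hellingerSq (p q : S → ℝ) : ℝ :=
  (∑ s, (√(p s) - √(q s)) ^ 2) / 2

lemma hellingerSq_nonneg : 0 ≤ hellingerSq p q := by
  unfold hellingerSq
  positivity

lemma hellingerSq_pos_iff (hp : ∀ s, 0 ≤ p s) (hq : ∀ s, 0 ≤ q s) :
    0 < hellingerSq p q ↔ p ≠ q := by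
  rw [hellingerSq, div_pos_iff_of_pos_right two_pos,
    Finset.sum_pos_iff_of_nonneg fun s _ => sq_nonneg _, Ne, funext_iff]
  simp [sq_pos_iff, sub_ne_zero, Real.sqrt_inj (hp _) (hq _)]

lemma one_sub_sum_sqrt_mul_eq_hellingerSq (hp : ∀ s, 0 ≤ p s) (hq : ∀ s, 0 ≤ q s)
    (hp₁ : ∑ s, p s = 1) (hq₁ : ∑ s, q s = 1) :
    1 - ∑ s, √(p s * q s) = hellingerSq p q := by
  have hterm : ∀ s, (√(p s) - √(q s)) ^ 2 = p s + q s - 2 * √(p s * q s) := fun s => by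
    rw [sub_sq, Real.sq_sqrt (hp s), Real.sq_sqrt (hq s), Real.sqrt_mul (hp s)]
    ring
  rw [hellingerSq, Finset.sum_congr rfl fun s _ => hterm s, Finset.sum_sub_distrib,
    Finset.sum_add_distrib, hp₁, hq₁, ← Finset.mul_sum]
  ring

end Hellinger

section Histories

variable {S A : Type}

def Hist.snoc {t : ℕ} (h : Hist S A t) (a : A) (s : S) : Hist S A (t + 1) :=
  (Fin.snoc h.1 s, Fin.snoc h.2 a)

lemma prefixH_snoc_castSucc {t : ℕ} (h : Hist S A t) (a : A) (s : S) (τ : Fin t) :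
    prefixH (h.snoc a s) τ.castSucc = prefixH h τ := by
  ext j
  · exact Fin.snoc_castSucc (α := fun _ => S) (n := t + 1) s h.1
      (Fin.castLE (Nat.succ_le_succ τ.isLt.le) j)
  · exact Fin.snoc_castSucc (α := fun _ => A) (n := t) a h.2 (Fin.castLE τ.isLt.le j)

lemma prefixH_snoc_last {t : ℕ} (h : Hist S A t) (a : A) (s : S) :
    prefixH (h.snoc a s) (Fin.last t) = h := by
  ext j
  · exact Fin.snoc_castSucc (α := fun _ => S) (n := t + 1) s h.1 j
  · exact Fin.snoc_castSucc (α := fun _ => A) (n := t) a h.2 j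

def histSnocEquiv (t : ℕ) : Hist S A t × A × S ≃ Hist S A (t + 1) where
  toFun x := x.1.snoc x.2.1 x.2.2
  invFun h := ((Fin.init h.1, Fin.init h.2), h.2 (Fin.last t), h.1 (Fin.last (t + 1)))
  left_inv x := by simp [Hist.snoc]
  right_inv h := by simp [Hist.snoc]

end Histories

section HistProb

variable {S A : Type} [Fintype S] [Fintype A] [DecidableEq S] (init : S)
  {δ δ₁ δ₂ : S → A → S → ℝ} {πf : (t : ℕ) → Hist S A t → A → ℝ}

lemma histProb_nonneg (hπ : ∀ t h a, 0 ≤ πf t h a) (hδ : ∀ s a s', 0 ≤ δ s a s') (t : ℕ)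
    (h : Hist S A t) : 0 ≤ histProb init δ πf t h := by
  unfold histProb
  exact mul_nonneg (by split_ifs <;> norm_num)
    (Finset.prod_nonneg fun τ _ => mul_nonneg (hπ _ _ _) (hδ _ _ _))

lemma histProb_snoc (t : ℕ) (h : Hist S A t) (a : A) (s : S) :
    histProb init δ πf (t + 1) (h.snoc a s)
      = histProb init δ πf t h * (πf t h a * δ (lastState h) a s) := by
  simp only [histProb, Fin.prod_univ_castSucc, prefixH_snoc_castSucc, prefixH_snoc_last]
  simp [Hist.snoc, lastState, Fin.succ_castSucc, -Fin.castSucc_succ]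

lemma BC_succ (hπ : ∀ t h a, 0 ≤ πf t h a) (hδ₁ : ∀ s a s', 0 ≤ δ₁ s a s')
    (hδ₂ : ∀ s a s', 0 ≤ δ₂ s a s') (t : ℕ) :
    BC init δ₁ δ₂ πf (t + 1) = ∑ h : Hist S A t,
      √(histProb init δ₁ πf t h * histProb init δ₂ πf t h) *
        ∑ a, πf t h a * ∑ s, √(δ₁ (lastState h) a s * δ₂ (lastState h) a s) := by
  rw [BC, ← (histSnocEquiv t).sum_comp, Fintype.sum_prod_type]
  refine Finset.sum_congr rfl fun h _ => ?_
  rw [Fintype.sum_prod_type, Finset.mul_sum]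
  refine Finset.sum_congr rfl fun a _ => ?_
  rw [Finset.mul_sum, Finset.mul_sum]
  refine Finset.sum_congr rfl fun s _ => ?_
  have hP : 0 ≤ histProb init δ₁ πf t h * histProb init δ₂ πf t h :=
    mul_nonneg (histProb_nonneg init hπ hδ₁ t h) (histProb_nonneg init hπ hδ₂ t h)
  have hregroup : ∀ P₁ P₂ p d₁ d₂ : ℝ,
      P₁ * (p * d₁) * (P₂ * (p * d₂)) = P₁ * P₂ * (p ^ 2 * (d₁ * d₂)) :=
    fun _ _ _ _ _ => by ring
  simp only [histSnocEquiv, Equiv.coe_fn_mk, histProb_snoc]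
  rw [hregroup, Real.sqrt_mul hP, Real.sqrt_mul (sq_nonneg _), Real.sqrt_sq (hπ _ _ _)]

end HistProb

namespace Policy

variable {S A : Type} [Fintype S] [Fintype A] {act : S → Finset A} (π : Policy S A act)

lemma sum_univ_eq_one (t : ℕ) (h : Hist S A t) : ∑ a, π.p t h a = 1 := by
  rw [← π.sum_one t h]
  exact (Finset.sum_subset (Finset.subset_univ _) fun a _ ha => π.zero_off t h a ha).symm

lemma mem_act_of_pos {t : ℕ} {h : Hist S A t} {a : A} (ha : 0 < π.p t h a) :
    a ∈ act (lastState h) := by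
  by_contra hmem
  exact ha.ne' (π.zero_off t h a hmem)

end Policy

lemma BC_sub_BC_succ {S A : Type} [Fintype S] [Fintype A] [DecidableEq S]
    (M : BinMMDP S A) (π : Policy S A M.act) (t : ℕ) :
    BC M.init (M.δ 0) (M.δ 1) π.p t - BC M.init (M.δ 0) (M.δ 1) π.p (t + 1) =
      ∑ h : Hist S A t, √(histProb M.init (M.δ 0) π.p t h * histProb M.init (M.δ 1) π.p t h) *
        ∑ a, π.p t h a * hellingerSq (M.δ 0 (lastState h) a) (M.δ 1 (lastState h) a) := by
  rw [BC_succ M.init π.nonneg (M.δ_nonneg 0) (M.δ_nonneg 1), BC, ← Finset.sum_sub_distrib]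
  refine Finset.sum_congr rfl fun h _ => ?_
  rw [← mul_one_sub]
  congr 1
  rw [← π.sum_univ_eq_one t h, ← Finset.sum_sub_distrib]
  refine Finset.sum_congr rfl fun a _ => ?_
  by_cases ha : a ∈ M.act (lastState h)
  · rw [← one_sub_sum_sqrt_mul_eq_hellingerSq (M.δ_nonneg 0 _ a) (M.δ_nonneg 1 _ a)
      (M.δ_sum 0 _ a ha) (M.δ_sum 1 _ a ha), mul_one_sub]
  · simp [π.zero_off t h a ha]

/-- **Characterization of strict decrease of the Bhattacharyya coefficient.**
For any binary MMDP `M`, any policy `π` and any `t`, `B(t+1,π) < B(t,π)` holds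
if and only if there exist a history `h_t` with `P₁^π(h_t)·P₂^π(h_t) > 0` and an
action `a ∈ A_{h_t(t)}` with `π_t(a|h_t) > 0` such that
`δ₁(·|h_t(t),a) ≠ δ₂(·|h_t(t),a)`. -/
theorem BC_strict_decrease_iff
    {S A : Type} [Fintype S] [Fintype A] [DecidableEq S]
    (M : BinMMDP S A) (π : Policy S A M.act) (t : ℕ) :
    BC M.init (M.δ 0) (M.δ 1) π.p (t + 1) < BC M.init (M.δ 0) (M.δ 1) π.p t
      ↔ ∃ h : Hist S A t,
          0 < histProb M.init (M.δ 0) π.p t h * histProb M.init (M.δ 1) π.p t h ∧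
          ∃ a ∈ M.act (lastState h),
            0 < π.p t h a ∧ M.δ 0 (lastState h) a ≠ M.δ 1 (lastState h) a := by
  have hterm_nonneg : ∀ (h : Hist S A t) (a : A),
      0 ≤ π.p t h a * hellingerSq (M.δ 0 (lastState h) a) (M.δ 1 (lastState h) a) :=
    fun h a => mul_nonneg (π.nonneg t h a) hellingerSq_nonneg
  rw [← sub_pos, BC_sub_BC_succ, Finset.sum_pos_iff_of_nonneg fun h _ =>
    mul_nonneg (Real.sqrt_nonneg _) (Finset.sum_nonneg fun a _ => hterm_nonneg h a)]
  simp only [Finset.mem_univ, true_and]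
  refine exists_congr fun h => ?_
  rw [mul_pos_iff_of_nonneg (Real.sqrt_nonneg _)
      (Finset.sum_nonneg fun a _ => hterm_nonneg h a), Real.sqrt_pos,
    Finset.sum_pos_iff_of_nonneg fun a _ => hterm_nonneg h a]
  refine and_congr_right fun _ => ?_
  simp only [Finset.mem_univ, true_and, mul_pos_iff_of_nonneg (π.nonneg t h _) hellingerSq_nonneg,
    hellingerSq_pos_iff (M.δ_nonneg 0 _ _) (M.δ_nonneg 1 _ _)]
  exact ⟨fun ⟨a, hπa, hne⟩ => ⟨a, π.mem_act_of_pos hπa, hπa, hne⟩,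
    fun ⟨a, _, hπa, hne⟩ => ⟨a, hπa, hne⟩⟩
end

section
/- Let M = {M_1, M_2} be a binary MMDP and S_r ⊆ S its set of revealing states. Given any policy π, let π' be a policy such that for all t and all h_t ∈ H_t: if h_t(t) ∉ S_r then π'_t(·|h_t) = π_t(·|h_t), and if h_t(t) ∈ S_r then π'_t(a|h_t) = 1 for some revealing action a ∈ A_{h_t(t)}. Then B(t, π') ≤ B(t, π) for all t ∈ ℕ, and hence lim_{t→∞} B(t, π') ≤ lim_{t→∞} B(t, π). -/
open Finset Filter

/-- A state-action pair `(s,a)` of a binary MMDP is revealing if the supports of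
`δ₁(·|s,a)` and `δ₂(·|s,a)` are disjoint. -/
def RevealingPair {S A : Type} [Fintype S] [Fintype A] (M : BinMMDP S A)
    (s : S) (a : A) : Prop :=
  ∀ s' : S, ¬(0 < M.δ 0 s a s' ∧ 0 < M.δ 1 s a s')

/-- A state is revealing if some available action at it forms a revealing pair. -/
def RevealingState {S A : Type} [Fintype S] [Fintype A] (M : BinMMDP S A) (s : S) : Prop :=
  ∃ a ∈ M.act s, RevealingPair M s a

/-
A revealing action at time `τ` leads to a successor state that has positive probability under
at most one of the two kernels, so every history passing through it has `P₁ · P₂ = 0` and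
contributes nothing to the Bhattacharyya coefficient of `π'`. The remaining histories never
visit a revealing state before their last step, so `π'` and `π` agree along them and they
contribute equally to both coefficients.
-/

lemma Policy.p_eq_zero_of_p_eq_one {S A : Type} [Fintype S] [Fintype A] {act : S → Finset A}
    (π : Policy S A act) {t : ℕ} {h : Hist S A t} {a b : A} (ha : a ∈ act (lastState h))
    (hπa : π.p t h a = 1) (hba : b ≠ a) : π.p t h b = 0 := by
  classical
  by_cases hb : b ∈ act (lastState h)
  · have hrest : ∑ x ∈ (act (lastState h)).erase a, π.p t h x = 0 := by
      linarith [add_sum_erase _ (π.p t h) ha, π.sum_one t h]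
    exact le_antisymm
      (hrest ▸ single_le_sum (fun x _ => π.nonneg t h x) (mem_erase.mpr ⟨hba, hb⟩))
      (π.nonneg t h b)
  · exact π.zero_off t h b hb

lemma RevealingPair.mul_eq_zero {S A : Type} [Fintype S] [Fintype A] {M : BinMMDP S A}
    {s : S} {a : A} (hr : RevealingPair M s a) (s' : S) :
    M.δ 0 s a s' * M.δ 1 s a s' = 0 := by
  rcases (M.δ_nonneg 0 s a s').eq_or_lt with h₀ | h₀
  · rw [← h₀, zero_mul]
  rcases (M.δ_nonneg 1 s a s').eq_or_lt with h₁ | h₁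
  · rw [← h₁, mul_zero]
  exact absurd ⟨h₀, h₁⟩ (hr s')

section histProb

variable {S A : Type} [Fintype S] [Fintype A] [DecidableEq S] (init : S)
  {πf : (t : ℕ) → Hist S A t → A → ℝ} {t : ℕ} (h : Hist S A t)

lemma histProb_eq_zero_of_step {δ : S → A → S → ℝ} (τ : Fin t)
    (hτ : πf τ (prefixH h τ) (h.2 τ) * δ (h.1 τ.castSucc) (h.2 τ) (h.1 τ.succ) = 0) :
    histProb init δ πf t h = 0 := by
  rw [histProb, prod_eq_zero (mem_univ τ) hτ, mul_zero]

lemma histProb_mul_histProb_eq_zero_of_step {δ₁ δ₂ : S → A → S → ℝ} (τ : Fin t)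
    (hτ : πf τ (prefixH h τ) (h.2 τ) = 0 ∨
      δ₁ (h.1 τ.castSucc) (h.2 τ) (h.1 τ.succ) * δ₂ (h.1 τ.castSucc) (h.2 τ) (h.1 τ.succ) = 0) :
    histProb init δ₁ πf t h * histProb init δ₂ πf t h = 0 := by
  rcases hτ with hπ | hδ
  · rw [histProb_eq_zero_of_step init h τ (by rw [hπ, zero_mul]), zero_mul]
  rcases mul_eq_zero.mp hδ with hδ₁ | hδ₂
  · rw [histProb_eq_zero_of_step init h τ (by rw [hδ₁, mul_zero]), zero_mul]
  · rw [histProb_eq_zero_of_step (δ := δ₂) init h τ (by rw [hδ₂, mul_zero]), mul_zero]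

lemma histProb_congr_policy {πf' : (t : ℕ) → Hist S A t → A → ℝ} (δ : S → A → S → ℝ)
    (hagree : ∀ τ : Fin t, πf' τ (prefixH h τ) (h.2 τ) = πf τ (prefixH h τ) (h.2 τ)) :
    histProb init δ πf' t h = histProb init δ πf t h := by
  simp only [histProb, hagree]

end histProb

lemma histProb_mul_histProb_eq_zero_of_revealing {S A : Type} [Fintype S] [Fintype A]
    [DecidableEq S] {M : BinMMDP S A} {π : Policy S A M.act} {t : ℕ} (h : Hist S A t)
    (τ : Fin t) {a : A} (ha : a ∈ M.act (h.1 τ.castSucc)) (hr : RevealingPair M (h.1 τ.castSucc) a)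
    (hπa : π.p τ (prefixH h τ) a = 1) :
    histProb M.init (M.δ 0) π.p t h * histProb M.init (M.δ 1) π.p t h = 0 := by
  apply histProb_mul_histProb_eq_zero_of_step M.init h τ
  by_cases hτa : h.2 τ = a
  · exact Or.inr (hτa ▸ hr.mul_eq_zero _)
  · exact Or.inl (π.p_eq_zero_of_p_eq_one ha hπa hτa)

/-- **Taking revealing actions at revealing states does not hurt.**
Let `π` be any policy, and let `π'` be a policy that coincides with `π` on histories whose
last state is not revealing and deterministically takes some revealing action whenever the
last state is revealing.  Then `B(t,π') ≤ B(t,π)` for all `t`, and hence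
`lim_{t→∞} B(t,π') ≤ lim_{t→∞} B(t,π)`. -/
theorem BC_le_of_revealing_modification
    {S A : Type} [Fintype S] [Fintype A] [DecidableEq S]
    (M : BinMMDP S A) (π π' : Policy S A M.act)
    (h1 : ∀ (t : ℕ) (h : Hist S A t), ¬ RevealingState M (lastState h) →
      ∀ a : A, π'.p t h a = π.p t h a)
    (h2 : ∀ (t : ℕ) (h : Hist S A t), RevealingState M (lastState h) →
      ∃ a ∈ M.act (lastState h), RevealingPair M (lastState h) a ∧ π'.p t h a = 1) :
    (∀ t : ℕ, BC M.init (M.δ 0) (M.δ 1) π'.p t ≤ BC M.init (M.δ 0) (M.δ 1) π.p t)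
      ∧ ∀ L L' : ℝ,
          Tendsto (fun t => BC M.init (M.δ 0) (M.δ 1) π'.p t) atTop (nhds L') →
          Tendsto (fun t => BC M.init (M.δ 0) (M.δ 1) π.p t) atTop (nhds L) →
          L' ≤ L := by
  have hBC : ∀ t, BC M.init (M.δ 0) (M.δ 1) π'.p t ≤ BC M.init (M.δ 0) (M.δ 1) π.p t := by
    intro t
    refine sum_le_sum fun h _ => ?_
    by_cases hvisit : ∃ τ : Fin t, RevealingState M (h.1 τ.castSucc)
    · obtain ⟨τ, hτ⟩ := hvisit
      obtain ⟨a, ha, hr, hπ'a⟩ := h2 τ (prefixH h τ) hτ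
      rw [histProb_mul_histProb_eq_zero_of_revealing h τ ha hr hπ'a, Real.sqrt_zero]
      exact Real.sqrt_nonneg _
    · push Not at hvisit
      have hagree (τ : Fin t) := h1 τ (prefixH h τ) (hvisit τ) (h.2 τ)
      rw [histProb_congr_policy M.init h _ hagree, histProb_congr_policy M.init h _ hagree]
  exact ⟨hBC, fun L L' hπ' hπ => le_of_tendsto_of_tendsto' hπ' hπ hBC⟩
end

section
/- Let M = {M_1, M_2} be a binary MMDP and suppose a stationary policy π achieves asymptotic perfect detection for M, i.e., lim_{t→∞} B(t, π) = 0. Then the Bhattacharyya coefficient converges exponentially fast: there exist c > 0 and λ ∈ (0,1) such that B(t, π) ≤ c·λ^t for all t ∈ ℕ. -/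
/-
Write `Q s s' = ∑ a, σ(a|s) √(δ₁(s'|s,a) δ₂(s'|s,a))`. For a stationary policy the square root of
`P₁(h) P₂(h)` factorises along the history `h`, so `B(t, σ) = (Qᵗ 𝟙)(s_init)` and
`B(t + u, σ) = ∑ s, Qᵗ(s_init, s) (Qᵘ 𝟙)(s)`. Hence `(Qᵘ 𝟙)(s) → 0` at every state `s` reachable
from `s_init`, and one `T` gives `(Q^T 𝟙)(s) ≤ 1/2` at all of them simultaneously. Then
`B(t + T, σ) ≤ B(t, σ) / 2` for every `t`, which is geometric decay.
-/

open Finset Filter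

/-- A stationary (Markovian, time-independent) randomized policy: a distribution over the
available actions at each state. -/
structure StatPolicy (S A : Type) [Fintype S] [Fintype A] (act : S → Finset A) where
  p : S → A → ℝ
  nonneg : ∀ s a, 0 ≤ p s a
  sum_one : ∀ s, ∑ a ∈ act s, p s a = 1
  zero_off : ∀ s, ∀ a ∉ act s, p s a = 0

/-- The history-dependent policy map induced by a stationary policy: it acts according to
the distribution attached to the last state of the history. -/
def StatPolicy.lift {S A : Type} [Fintype S] [Fintype A] {act : S → Finset A}
    (σ : StatPolicy S A act) : (t : ℕ) → Hist S A t → A → ℝ :=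
  fun _ h a => σ.p (lastState h) a

open Matrix

theorem le_mul_pow_div_of_add_le_mul {f : ℕ → ℝ} {T : ℕ} {r M : ℝ} (hT : 0 < T) (hr : 0 ≤ r)
    (hstep : ∀ t, f (t + T) ≤ r * f t) (hinit : ∀ t < T, f t ≤ M) :
    ∀ t, f t ≤ M * r ^ (t / T) := by
  intro t
  induction t using Nat.strong_induction_on with
  | _ t ih =>
    rcases lt_or_ge t T with ht | ht
    · simpa [Nat.div_eq_of_lt ht] using hinit t ht
    · obtain ⟨u, rfl⟩ := Nat.exists_eq_add_of_le' ht
      calc f (u + T) ≤ r * f u := hstep u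
        _ ≤ r * (M * r ^ (u / T)) := by gcongr; exact ih u (by omega)
        _ = M * r ^ ((u + T) / T) := by
          rw [Nat.add_div_right u hT, pow_succ]; ring

theorem exists_le_mul_pow_of_add_le_mul {f : ℕ → ℝ} {T : ℕ} {r : ℝ} (hT : 0 < T) (hr0 : 0 < r)
    (hr1 : r < 1) (hstep : ∀ t, f (t + T) ≤ r * f t) :
    ∃ c > 0, ∃ l : ℝ, 0 < l ∧ l < 1 ∧ ∀ t, f t ≤ c * l ^ t := by
  set M := 1 + ∑ t ∈ range T, |f t|
  have hM : 0 < M := by positivity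
  have hinit : ∀ t < T, f t ≤ M := fun t ht =>
    calc f t ≤ |f t| := le_abs_self _
      _ ≤ ∑ t ∈ range T, |f t| :=
        single_le_sum (f := fun t => |f t|) (fun _ _ => abs_nonneg _) (mem_range.2 ht)
      _ ≤ M := le_add_of_nonneg_left zero_le_one
  set l := r ^ ((T : ℝ)⁻¹)
  have hl0 : 0 < l := Real.rpow_pos_of_pos hr0 _
  have hl1 : l < 1 := Real.rpow_lt_one hr0.le hr1 (by positivity)
  have hlT : l ^ T = r := Real.rpow_inv_natCast_pow hr0.le hT.ne'
  have hpow : ∀ t, r ^ (t / T) * r ≤ l ^ t := fun t =>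
    calc r ^ (t / T) * r = l ^ (T * (t / T)) * l ^ T := by rw [pow_mul, hlT]
      _ ≤ l ^ (T * (t / T)) * l ^ (t % T) :=
        mul_le_mul_of_nonneg_left (pow_le_pow_of_le_one hl0.le hl1.le (Nat.mod_lt t hT).le)
          (by positivity)
      _ = l ^ t := by rw [← pow_add, Nat.div_add_mod]
  refine ⟨M / r, div_pos hM hr0, l, hl0, hl1, fun t => ?_⟩
  calc f t ≤ M * r ^ (t / T) := le_mul_pow_div_of_add_le_mul hT hr0.le hstep hinit t
    _ = M / r * (r ^ (t / T) * r) := by field_simp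
    _ ≤ M / r * l ^ t := by gcongr; exact hpow t

namespace Matrix

variable {ι : Type*} [Fintype ι] [DecidableEq ι] {Q : Matrix ι ι ℝ}

theorem pow_mulVec_one_nonneg (hQ : ∀ i j, 0 ≤ Q i j) (t : ℕ) (i : ι) : 0 ≤ (Q ^ t *ᵥ 1) i :=
  sum_nonneg fun j _ => by simpa using pow_apply_nonneg hQ t i j

theorem pow_add_mulVec_one_apply (t u : ℕ) (i : ι) :
    (Q ^ (t + u) *ᵥ 1) i = ∑ j, (Q ^ t) i j * (Q ^ u *ᵥ 1) j := by
  rw [pow_add, ← mulVec_mulVec]; rfl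

theorem tendsto_pow_mulVec_one_of_pow_apply_pos (hQ : ∀ i j, 0 ≤ Q i j) {i j : ι} {t : ℕ}
    (hij : 0 < (Q ^ t) i j) (hi : Tendsto (fun n => (Q ^ n *ᵥ 1) i) atTop (nhds 0)) :
    Tendsto (fun u => (Q ^ u *ᵥ 1) j) atTop (nhds 0) := by
  have hbound : ∀ u, (Q ^ u *ᵥ 1) j ≤ (Q ^ (t + u) *ᵥ 1) i / (Q ^ t) i j := fun u => by
    rw [le_div_iff₀' hij, pow_add_mulVec_one_apply]
    exact single_le_sum (f := fun k => (Q ^ t) i k * (Q ^ u *ᵥ 1) k)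
      (fun k _ => mul_nonneg (pow_apply_nonneg hQ t i k) (pow_mulVec_one_nonneg hQ u k))
      (mem_univ j)
  have hshift : Tendsto (fun u => (Q ^ (t + u) *ᵥ 1) i / (Q ^ t) i j) atTop (nhds 0) := by
    simpa [Function.comp_def, Nat.add_comm t] using
      (hi.comp (tendsto_add_atTop_nat t)).div_const ((Q ^ t) i j)
  exact squeeze_zero (pow_mulVec_one_nonneg hQ · j) hbound hshift

theorem exists_pow_add_mulVec_one_le_half (hQ : ∀ i j, 0 ≤ Q i j) {i : ι}
    (hi : Tendsto (fun n => (Q ^ n *ᵥ 1) i) atTop (nhds 0)) :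
    ∃ T > 0, ∀ t, (Q ^ (t + T) *ᵥ 1) i ≤ 1 / 2 * (Q ^ t *ᵥ 1) i := by
  have hreach : ∀ᶠ u in atTop, ∀ j, (∃ t, 0 < (Q ^ t) i j) → (Q ^ u *ᵥ 1) j ≤ 1 / 2 := by
    refine eventually_all.2 fun j => ?_
    by_cases hj : ∃ t, 0 < (Q ^ t) i j
    · obtain ⟨t, ht⟩ := hj
      filter_upwards [(tendsto_pow_mulVec_one_of_pow_apply_pos hQ ht hi).eventually_le_const
        (by norm_num : (0 : ℝ) < 1 / 2)] with u hu using fun _ => hu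
    · exact Eventually.of_forall fun _ h => absurd h hj
  obtain ⟨T, hhalf, hT⟩ := (hreach.and (eventually_gt_atTop 0)).exists
  refine ⟨T, hT, fun t => ?_⟩
  -- only states reachable from `i` in `t` steps contribute to the sum
  calc (Q ^ (t + T) *ᵥ 1) i = ∑ j, (Q ^ t) i j * (Q ^ T *ᵥ 1) j := pow_add_mulVec_one_apply t T i
    _ ≤ ∑ j, (Q ^ t) i j * (1 / 2) := sum_le_sum fun j _ => by
      rcases (pow_apply_nonneg hQ t i j).eq_or_lt with h0 | hpos
      · simp [← h0]
      · exact mul_le_mul_of_nonneg_left (hhalf j ⟨t, hpos⟩) hpos.le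
    _ = 1 / 2 * (Q ^ t *ᵥ 1) i := by simp [mulVec, dotProduct, sum_mul, mul_comm]

theorem exists_pow_mulVec_one_le_mul_pow (hQ : ∀ i j, 0 ≤ Q i j) {i : ι}
    (hi : Tendsto (fun n => (Q ^ n *ᵥ 1) i) atTop (nhds 0)) :
    ∃ c > 0, ∃ l : ℝ, 0 < l ∧ l < 1 ∧ ∀ t, (Q ^ t *ᵥ 1) i ≤ c * l ^ t :=
  have ⟨_, hT, hstep⟩ := exists_pow_add_mulVec_one_le_half hQ hi
  exists_le_mul_pow_of_add_le_mul hT (by norm_num) (by norm_num) hstep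

end Matrix

namespace Hist

variable {S A : Type}

def consEquiv (t : ℕ) : S × A × Hist S A t ≃ Hist S A (t + 1) where
  toFun x := (Fin.cons x.1 x.2.2.1, Fin.cons x.2.1 x.2.2.2)
  invFun h := (h.1 0, h.2 0, (Fin.tail h.1, Fin.tail h.2))
  left_inv := by rintro ⟨s, a, g₁, g₂⟩; simp
  right_inv := by rintro ⟨h₁, h₂⟩; simp

def weight (q : S → A → S → ℝ) {t : ℕ} (h : Hist S A t) : ℝ :=
  ∏ τ : Fin t, q (h.1 τ.castSucc) (h.2 τ) (h.1 τ.succ)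

theorem weight_consEquiv (q : S → A → S → ℝ) {t : ℕ} (x : S × A × Hist S A t) :
    weight q (consEquiv t x) = q x.1 x.2.1 (x.2.2.1 0) * weight q x.2.2 := by
  simp [weight, consEquiv, Fin.prod_univ_succ]

theorem weight_mul (q₁ q₂ : S → A → S → ℝ) {t : ℕ} (h : Hist S A t) :
    weight q₁ h * weight q₂ h = weight (fun s a s' => q₁ s a s' * q₂ s a s') h :=
  prod_mul_distrib.symm

theorem sqrt_weight {q : S → A → S → ℝ} (hq : ∀ s a s', 0 ≤ q s a s') {t : ℕ} (h : Hist S A t) :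
    √(weight q h) = weight (fun s a s' => √(q s a s')) h :=
  Real.sqrt_prod _ fun _ _ => hq _ _ _

end Hist

section MDP

variable {S A : Type} [Fintype S] [Fintype A]

def stepMatrix (q : S → A → S → ℝ) : Matrix S S ℝ := Matrix.of fun s s' => ∑ a, q s a s'

theorem sum_ite_weight_eq_pow_mulVec_one [DecidableEq S] (q : S → A → S → ℝ) (t : ℕ) (s : S) :
    ∑ h : Hist S A t, (if h.1 0 = s then 1 else 0) * h.weight q = (stepMatrix q ^ t *ᵥ 1) s := by
  induction t generalizing s with
  | zero =>
    rw [pow_zero, one_mulVec, Fintype.sum_prod_type]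
    simp only [Hist.weight, univ_eq_empty, prod_empty, mul_one, univ_unique, sum_singleton]
    exact ((Equiv.funUnique (Fin 1) S).sum_comp fun s' => if s' = s then 1 else 0).trans
      (by simp)
  | succ t ih =>
    have hfiber : ∀ φ : S → ℝ, ∑ s', φ s' * (stepMatrix q ^ t *ᵥ 1) s' =
        ∑ g : Hist S A t, φ (g.1 0) * g.weight q := fun φ => by
      simp only [← ih, mul_sum, ← mul_assoc, mul_ite, mul_one, mul_zero, ite_mul, zero_mul]
      rw [sum_comm]
      simp
    calc ∑ h : Hist S A (t + 1), (if h.1 0 = s then 1 else 0) * h.weight q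
        = ∑ a, ∑ g : Hist S A t, q s a (g.1 0) * g.weight q := by
          rw [← (Hist.consEquiv t).sum_comp, Fintype.sum_prod_type]
          simp only [Hist.weight_consEquiv]
          simp [Hist.consEquiv, Fintype.sum_prod_type]
      _ = ∑ s', stepMatrix q s s' * (stepMatrix q ^ t *ᵥ 1) s' := by
          rw [hfiber, sum_comm]
          simp [stepMatrix, sum_mul]
      _ = (stepMatrix q ^ (t + 1) *ᵥ 1) s := by
          rw [pow_succ', ← mulVec_mulVec]; rfl

variable {act : S → Finset A}

theorem histProb_lift [DecidableEq S] (s : S) (δ : S → A → S → ℝ) (σ : StatPolicy S A act) {t : ℕ}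
    (h : Hist S A t) :
    histProb s δ σ.lift t h =
      (if h.1 0 = s then 1 else 0) * h.weight fun s a s' => σ.p s a * δ s a s' :=
  rfl

noncomputable def bhattacharyyaMatrix (δ₁ δ₂ : S → A → S → ℝ) (σ : StatPolicy S A act) :
    Matrix S S ℝ :=
  stepMatrix fun s a s' => σ.p s a * √(δ₁ s a s' * δ₂ s a s')

theorem bhattacharyyaMatrix_nonneg (δ₁ δ₂ : S → A → S → ℝ) (σ : StatPolicy S A act) (s s' : S) :
    0 ≤ bhattacharyyaMatrix δ₁ δ₂ σ s s' :=
  sum_nonneg fun a _ => mul_nonneg (σ.nonneg s a) (Real.sqrt_nonneg _)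

theorem BC_lift_eq_pow_mulVec_one [DecidableEq S] {δ₁ δ₂ : S → A → S → ℝ}
    (hδ₁ : ∀ s a s', 0 ≤ δ₁ s a s') (hδ₂ : ∀ s a s', 0 ≤ δ₂ s a s') (σ : StatPolicy S A act) (s : S) (t : ℕ) :
    BC s δ₁ δ₂ σ.lift t = (bhattacharyyaMatrix δ₁ δ₂ σ ^ t *ᵥ 1) s := by
  rw [BC, bhattacharyyaMatrix, ← sum_ite_weight_eq_pow_mulVec_one]
  refine sum_congr rfl fun h _ => ?_
  have hstep : ∀ s a s', √(σ.p s a * δ₁ s a s' * (σ.p s a * δ₂ s a s')) =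
      σ.p s a * √(δ₁ s a s' * δ₂ s a s') := fun s a s' => by
    rw [mul_mul_mul_comm, Real.sqrt_mul (mul_self_nonneg _), Real.sqrt_mul_self (σ.nonneg s a)]
  have hnonneg : ∀ s a s', 0 ≤ σ.p s a * δ₁ s a s' * (σ.p s a * δ₂ s a s') := fun s a s' =>
    mul_nonneg (mul_nonneg (σ.nonneg s a) (hδ₁ s a s')) (mul_nonneg (σ.nonneg s a) (hδ₂ s a s'))
  rw [histProb_lift, histProb_lift]
  split_ifs
  · simp only [one_mul, Hist.weight_mul, Hist.sqrt_weight hnonneg, hstep]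
  · simp

end MDP

/-- **Exponential convergence of the Bhattacharyya coefficient.**
If a stationary policy `σ` achieves asymptotic perfect detection for a binary MMDP `M`,
i.e. `B(t,σ) → 0`, then the convergence is exponentially fast: there are `c > 0` and
`0 < λ < 1` with `B(t,σ) ≤ c·λᵗ` for all `t`. -/
theorem BC_exponential_decay_of_APD
    {S A : Type} [Fintype S] [Fintype A] [DecidableEq S]
    (M : BinMMDP S A) (σ : StatPolicy S A M.act)
    (hAPD : Tendsto (fun t => BC M.init (M.δ 0) (M.δ 1) σ.lift t) atTop (nhds 0)) :
    ∃ c > 0, ∃ l : ℝ, 0 < l ∧ l < 1 ∧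
      ∀ t : ℕ, BC M.init (M.δ 0) (M.δ 1) σ.lift t ≤ c * l ^ t := by
  simp only [BC_lift_eq_pow_mulVec_one (M.δ_nonneg 0) (M.δ_nonneg 1)] at hAPD ⊢
  exact Matrix.exists_pow_mulVec_one_le_mul_pow (bhattacharyyaMatrix_nonneg _ _ σ) hAPD
end

section
/- Let W be an n×n real matrix with nonnegative entries whose row sums are all at most 1, let x ∈ ℝ^n, and let 𝟙 denote the all-ones vector in ℝ^n. If lim_{t→∞} xᵀ Wᵗ 𝟙 = 0, then there exist c > 0 and λ ∈ (0,1) such that |xᵀ Wᵗ 𝟙| ≤ c·λᵗ for all t ∈ ℕ. -/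
/-!
The vectors `Wᵗ 𝟙` decrease entrywise to a fixed point `L` of `W`, and `x ⬝ᵥ L = 0` since
`x ⬝ᵥ Wᵗ 𝟙 → 0`. Hence `x ⬝ᵥ Wᵗ 𝟙 = x ⬝ᵥ Wᵗ u` with `u = 𝟙 - L ≥ 0`, and `Wᵗ u` decreases to `0`.
So some power `W ^ T` halves `u` entrywise (coordinates where `u` vanishes stay zero by
monotonicity), and since `W` is nonnegative, `W ^ (t + T) u ≤ Wᵗ u / 2` for all `t`: the decay
is geometric with rate `2 ^ (-1 / T)`.
-/

open Filter Topology

theorem abs_dotProduct_le_abs_dotProduct {ι : Type*} [Fintype ι] (x : ι → ℝ) {y : ι → ℝ}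
    (hy : 0 ≤ y) : |x ⬝ᵥ y| ≤ |x| ⬝ᵥ y :=
  (Finset.abs_sum_le_sum_abs _ _).trans_eq <|
    Finset.sum_congr rfl fun i _ => by rw [abs_mul, abs_of_nonneg (hy i), Pi.abs_apply]

theorem Antitone.le_div_pow_mul_pow_of_add_le {f : ℕ → ℝ} (hf : Antitone f) (hf0 : 0 ≤ f 0)
    {l : ℝ} (hl0 : 0 < l) (hl1 : l ≤ 1) {T : ℕ} (hT : 0 < T)
    (hstep : ∀ t, f (t + T) ≤ l ^ T * f t) (t : ℕ) : f t ≤ f 0 / l ^ T * l ^ t := by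
  induction t using Nat.strong_induction_on with
  | _ t ih =>
    rcases lt_or_ge t T with htT | hTt
    · calc f t ≤ f 0 := hf (Nat.zero_le t)
        _ = f 0 / l ^ T * l ^ T := by field_simp
        _ ≤ f 0 / l ^ T * l ^ t :=
          mul_le_mul_of_nonneg_left (pow_le_pow_of_le_one hl0.le hl1 htT.le) (by positivity)
    · obtain ⟨s, rfl⟩ := Nat.exists_eq_add_of_le' hTt
      calc f (s + T) ≤ l ^ T * f s := hstep s
        _ ≤ l ^ T * (f 0 / l ^ T * l ^ s) := by gcongr; exact ih s (by omega)
        _ = f 0 / l ^ T * l ^ (s + T) := by field_simp; ring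

namespace Matrix

variable {ι : Type*} [Fintype ι] {A : Matrix ι ι ℝ} {u : ι → ℝ}

theorem mulVec_mono_of_nonneg (hA : ∀ i j, 0 ≤ A i j) : Monotone (A *ᵥ ·) :=
  fun _ _ huv i => dotProduct_le_dotProduct_of_nonneg_left huv (hA i)

theorem mulVec_nonneg_of_nonneg (hA : ∀ i j, 0 ≤ A i j) (hu : 0 ≤ u) : 0 ≤ A *ᵥ u :=
  fun i => dotProduct_nonneg_of_nonneg (hA i) hu

variable [DecidableEq ι]

theorem pow_mulVec_eq_self {L : ι → ℝ} (hL : A *ᵥ L = L) (t : ℕ) : A ^ t *ᵥ L = L := by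
  induction t with
  | zero => simp
  | succ t ih => rw [pow_succ', ← mulVec_mulVec, ih, hL]

theorem antitone_pow_mulVec (hA : ∀ i j, 0 ≤ A i j) (hAu : A *ᵥ u ≤ u) :
    Antitone fun t : ℕ => A ^ t *ᵥ u := by
  refine antitone_nat_of_succ_le fun t => ?_
  rw [pow_succ, ← mulVec_mulVec]
  exact mulVec_mono_of_nonneg (pow_apply_nonneg hA t) hAu

theorem exists_tendsto_pow_mulVec (hA : ∀ i j, 0 ≤ A i j) (hu : 0 ≤ u) (hAu : A *ᵥ u ≤ u) :
    ∃ L ≤ u, A *ᵥ L = L ∧ Tendsto (fun t : ℕ => A ^ t *ᵥ u) atTop (𝓝 L) := by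
  have hanti := antitone_pow_mulVec hA hAu
  have hbdd : BddBelow (Set.range fun t : ℕ => A ^ t *ᵥ u) :=
    ⟨0, Set.forall_mem_range.2 fun t => mulVec_nonneg_of_nonneg (pow_apply_nonneg hA t) hu⟩
  have hlim := tendsto_atTop_ciInf hanti hbdd
  refine ⟨_, by simpa using hanti.le_of_tendsto hlim 0, ?_, hlim⟩
  have hshift : Tendsto (fun t : ℕ => A *ᵥ (A ^ t *ᵥ u)) atTop (𝓝 (⨅ t : ℕ, A ^ t *ᵥ u)) := by
    simpa only [Function.comp_def, pow_succ', ← mulVec_mulVec] using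
      hlim.comp (tendsto_add_atTop_nat 1)
  exact tendsto_nhds_unique
    (((continuous_const.matrix_mulVec continuous_id).tendsto _).comp hlim) hshift

theorem exists_pow_mulVec_le_half_smul (hA : ∀ i j, 0 ≤ A i j) (hu : 0 ≤ u) (hAu : A *ᵥ u ≤ u)
    (h : Tendsto (fun t : ℕ => A ^ t *ᵥ u) atTop (𝓝 0)) :
    ∃ T : ℕ, 0 < T ∧ A ^ T *ᵥ u ≤ (1 / 2 : ℝ) • u := by
  have hanti := antitone_pow_mulVec hA hAu
  have hev : ∀ᶠ t : ℕ in atTop, ∀ i, (A ^ t *ᵥ u) i ≤ u i / 2 := by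
    refine eventually_all.2 fun i => ?_
    rcases (hu i).eq_or_lt with hui | hui
    · refine Eventually.of_forall fun t => ?_
      simpa [← hui] using hanti (Nat.zero_le t) i
    · exact (tendsto_pi_nhds.1 h i).eventually (gt_mem_nhds (half_pos hui)) |>.mono
        fun _ => le_of_lt
  obtain ⟨T, hT, hle⟩ := ((eventually_gt_atTop 0).and hev).exists
  exact ⟨T, hT, fun i => by simpa [div_eq_inv_mul] using hle i⟩

theorem exists_pow_mulVec_le_two_mul_pow_smul (hA : ∀ i j, 0 ≤ A i j) (hu : 0 ≤ u)
    (hAu : A *ᵥ u ≤ u) (h : Tendsto (fun t : ℕ => A ^ t *ᵥ u) atTop (𝓝 0)) :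
    ∃ l : ℝ, 0 < l ∧ l < 1 ∧ ∀ t : ℕ, A ^ t *ᵥ u ≤ (2 * l ^ t) • u := by
  obtain ⟨T, hT, hhalf⟩ := exists_pow_mulVec_le_half_smul hA hu hAu h
  set l : ℝ := (1 / 2 : ℝ) ^ (T⁻¹ : ℝ)
  have hl0 : 0 < l := Real.rpow_pos_of_pos (by norm_num) _
  have hlT : l ^ T = 1 / 2 := Real.rpow_inv_natCast_pow (by norm_num) hT.ne'
  refine ⟨l, hl0, Real.rpow_lt_one (by norm_num) (by norm_num) (by positivity), fun t i => ?_⟩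
  have hstep (s : ℕ) : (A ^ (s + T) *ᵥ u) i ≤ l ^ T * (A ^ s *ᵥ u) i := by
    rw [pow_add, ← mulVec_mulVec, hlT]
    simpa [mulVec_smul] using mulVec_mono_of_nonneg (pow_apply_nonneg hA s) hhalf i
  have := Antitone.le_div_pow_mul_pow_of_add_le (fun _ _ hst => antitone_pow_mulVec hA hAu hst i)
    (by simpa using hu i) hl0 (Real.rpow_le_one (by norm_num) (by norm_num) (by positivity))
    hT hstep t
  simp only [pow_zero, one_mulVec, hlT] at this
  simpa [mul_comm, mul_assoc, mul_left_comm] using this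

end Matrix

open Matrix in
/-- Let `W` be a nonnegative square real matrix whose row sums are at most `1`, and
let `x` be a real vector.  If `xᵀ Wᵗ 𝟙 → 0` as `t → ∞`, then the convergence is
exponentially fast: there are `c > 0` and `0 < λ < 1` with `|xᵀ Wᵗ 𝟙| ≤ c·λᵗ` for all `t`. -/
theorem substochastic_matrix_exponential_decay
    {n : ℕ} (W : Matrix (Fin n) (Fin n) ℝ)
    (hW : ∀ i j, 0 ≤ W i j) (hrow : ∀ i, ∑ j, W i j ≤ 1)
    (x : Fin n → ℝ)
    (h : Tendsto (fun t : ℕ => dotProduct x ((W ^ t).mulVec (fun _ => 1)))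
      atTop (nhds 0)) :
    ∃ c > 0, ∃ l : ℝ, 0 < l ∧ l < 1 ∧
      ∀ t : ℕ, |dotProduct x ((W ^ t).mulVec (fun _ => 1))| ≤ c * l ^ t := by
  have hW1 : W *ᵥ (fun _ => 1) ≤ fun _ => 1 := fun i => by simpa [mulVec, dotProduct] using hrow i
  obtain ⟨L, hL1, hWL, hlim⟩ := exists_tendsto_pow_mulVec hW (fun _ => zero_le_one) hW1
  have hxL : x ⬝ᵥ L = 0 :=
    tendsto_nhds_unique (((continuous_const.dotProduct continuous_id).tendsto L).comp hlim) h
  set u : Fin n → ℝ := (fun _ => 1) - L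
  have hu : 0 ≤ u := sub_nonneg.2 hL1
  have hpow_u (t : ℕ) : W ^ t *ᵥ u = W ^ t *ᵥ (fun _ => 1) - L := by
    rw [mulVec_sub, pow_mulVec_eq_self hWL]
  obtain ⟨l, hl0, hl1, hdecay⟩ := exists_pow_mulVec_le_two_mul_pow_smul hW hu
    (by rw [← pow_one W, hpow_u]; exact sub_le_sub_right (by rwa [pow_one]) L)
    (by simpa only [hpow_u, sub_self] using hlim.sub_const L)
  have hxu : 0 ≤ |x| ⬝ᵥ u := dotProduct_nonneg_of_nonneg (abs_nonneg x) hu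
  refine ⟨2 * (|x| ⬝ᵥ u) + 1, by positivity, l, hl0, hl1, fun t => ?_⟩
  calc |x ⬝ᵥ (W ^ t *ᵥ fun _ => 1)| = |x ⬝ᵥ (W ^ t *ᵥ u)| := by
        rw [hpow_u, dotProduct_sub, hxL, sub_zero]
    _ ≤ |x| ⬝ᵥ (W ^ t *ᵥ u) :=
        abs_dotProduct_le_abs_dotProduct x (mulVec_nonneg_of_nonneg (pow_apply_nonneg hW t) hu)
    _ ≤ |x| ⬝ᵥ ((2 * l ^ t) • u) :=
        dotProduct_le_dotProduct_of_nonneg_left (hdecay t) (abs_nonneg x)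
    _ = 2 * (|x| ⬝ᵥ u) * l ^ t := by rw [dotProduct_smul, smul_eq_mul]; ring
    _ ≤ (2 * (|x| ⬝ᵥ u) + 1) * l ^ t := by gcongr; linarith
end

section
/- Let M = {M_1, M_2} be a binary MMDP and π a stationary policy. Define the matrix W ∈ ℝ^{|S|×|S|} by W_{ij} = Σ_{a ∈ A_i} π(a|i)·√(δ_1(j|i,a)·δ_2(j|i,a)) for states i, j ∈ S. Then for all t ∈ ℕ, the Bhattacharyya coefficient satisfies B(t, π) = e_{s_init}ᵀ Wᵗ 𝟙, where e_{s_init} is the standard basis vector indexed by s_init and 𝟙 is the all-ones vector. -/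
open Finset Filter

/-! Under a stationary policy the action probabilities σ(a_τ|s_τ) enter both path probabilities
identically, so √(P₁(h)·P₂(h)) factorizes along the history into the factors
σ(a_τ|s_τ)·√(δ₁(s_{τ+1}|s_τ,a_τ)·δ₂(s_{τ+1}|s_τ,a_τ)). Summing out the actions independently turns
each factor into the entry W_{s_τ s_{τ+1}}, and the sum over state paths from s_init of products of
entries of W is the path expansion of (Wᵗ𝟙)_{s_init}. -/

open Matrix

theorem Matrix.pow_mulVec_apply_eq_sum_paths {S R : Type*} [Fintype S] [DecidableEq S]
    [CommSemiring R] (W : Matrix S S R) (v : S → R) (t : ℕ) (i : S) :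
    (W ^ t *ᵥ v) i = ∑ f : Fin (t + 1) → S,
      (if f 0 = i then 1 else 0) * (∏ τ : Fin t, W (f τ.castSucc) (f τ.succ)) *
        v (f (Fin.last t)) := by
  induction t generalizing i with
  | zero =>
    rw [← (Equiv.funUnique (Fin 1) S).symm.sum_comp]
    simp
  | succ t ih =>
    calc (W ^ (t + 1) *ᵥ v) i = ∑ j, W i j * (W ^ t *ᵥ v) j := by
          rw [pow_succ', ← mulVec_mulVec]; rfl
      _ = ∑ g : Fin (t + 1) → S, W i (g 0) * (∏ τ : Fin t, W (g τ.castSucc) (g τ.succ)) *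
            v (g (Fin.last t)) := by
          simp_rw [ih, mul_sum, ← mul_assoc, mul_ite, mul_one, mul_zero, ite_mul, zero_mul]
          rw [sum_comm]
          simp
      _ = _ := by
          rw [← (Fin.consEquiv fun _ : Fin (t + 2) => S).sum_comp, Fintype.sum_prod_type]
          simp [Fin.prod_univ_succ, ← Fin.succ_last, mul_assoc]

namespace StatPolicy

variable {S A : Type} [Fintype S] [Fintype A] {act : S → Finset A}

noncomputable def bhattacharyyaMatrix (σ : StatPolicy S A act) (δ₁ δ₂ : S → A → S → ℝ) :
    Matrix S S ℝ :=
  Matrix.of fun i j => ∑ a ∈ act i, σ.p i a * √(δ₁ i a j * δ₂ i a j)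

theorem bhattacharyyaMatrix_apply (σ : StatPolicy S A act) (δ₁ δ₂ : S → A → S → ℝ) (i j : S) :
    σ.bhattacharyyaMatrix δ₁ δ₂ i j = ∑ a, σ.p i a * √(δ₁ i a j * δ₂ i a j) :=
  sum_subset (subset_univ _) fun a _ ha => by rw [σ.zero_off i a ha, zero_mul]

theorem lift_prefixH (σ : StatPolicy S A act) {t : ℕ} (h : Hist S A t) (τ : Fin t) (a : A) :
    σ.lift τ (prefixH h τ) a = σ.p (h.1 τ.castSucc) a :=
  rfl

variable [DecidableEq S]

theorem sqrt_histProb_mul_histProb (σ : StatPolicy S A act) {δ₁ δ₂ : S → A → S → ℝ}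
    (hδ₁ : ∀ s a s', 0 ≤ δ₁ s a s') (hδ₂ : ∀ s a s', 0 ≤ δ₂ s a s') (init : S) {t : ℕ}
    (h : Hist S A t) :
    √(histProb init δ₁ σ.lift t h * histProb init δ₂ σ.lift t h) =
      (if h.1 0 = init then 1 else 0) * ∏ τ : Fin t, σ.p (h.1 τ.castSucc) (h.2 τ) *
        √(δ₁ (h.1 τ.castSucc) (h.2 τ) (h.1 τ.succ) * δ₂ (h.1 τ.castSucc) (h.2 τ) (h.1 τ.succ)) := by
  unfold histProb
  split_ifs
  · have hp (τ : Fin t) : 0 ≤ σ.p (h.1 τ.castSucc) (h.2 τ) := σ.nonneg _ _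
    simp only [one_mul, lift_prefixH, ← prod_mul_distrib]
    rw [Real.sqrt_prod _ fun τ _ =>
      mul_nonneg (mul_nonneg (hp τ) (hδ₁ _ _ _)) (mul_nonneg (hp τ) (hδ₂ _ _ _))]
    refine prod_congr rfl fun τ _ => ?_
    rw [mul_mul_mul_comm, Real.sqrt_mul (mul_self_nonneg _), Real.sqrt_mul_self (hp τ)]
  · simp

theorem bc_lift_eq_sum_paths (σ : StatPolicy S A act) {δ₁ δ₂ : S → A → S → ℝ}
    (hδ₁ : ∀ s a s', 0 ≤ δ₁ s a s') (hδ₂ : ∀ s a s', 0 ≤ δ₂ s a s') (init : S) (t : ℕ) :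
    BC init δ₁ δ₂ σ.lift t = ∑ f : Fin (t + 1) → S, (if f 0 = init then 1 else 0) *
      ∏ τ : Fin t, σ.bhattacharyyaMatrix δ₁ δ₂ (f τ.castSucc) (f τ.succ) := by
  simp only [BC, sqrt_histProb_mul_histProb σ hδ₁ hδ₂, Fintype.sum_prod_type, mul_sum,
    bhattacharyyaMatrix_apply, Fintype.prod_sum]

end StatPolicy

/-- **Computation of the Bhattacharyya coefficient via matrix powers.**
For a binary MMDP `M` and a stationary policy `σ`, define the matrix `W` by
`W_{ij} = Σ_{a ∈ A_i} σ(a|i)·√(δ₁(j|i,a)·δ₂(j|i,a))`.  Then for all `t`,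
`B(t,σ) = e_{s_init}ᵀ Wᵗ 𝟙`. -/
theorem BC_eq_matrix_power
    {S A : Type} [Fintype S] [Fintype A] [DecidableEq S]
    (M : BinMMDP S A) (σ : StatPolicy S A M.act) (t : ℕ) :
    BC M.init (M.δ 0) (M.δ 1) σ.lift t
      = dotProduct (Pi.single M.init 1)
          (((Matrix.of fun i j : S =>
              ∑ a ∈ M.act i, σ.p i a * Real.sqrt (M.δ 0 i a j * M.δ 1 i a j)) ^ t).mulVec
            (fun _ => 1)) := by
  change _ = Pi.single M.init 1 ⬝ᵥ (σ.bhattacharyyaMatrix (M.δ 0) (M.δ 1) ^ t *ᵥ fun _ => 1)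
  rw [σ.bc_lift_eq_sum_paths (M.δ_nonneg 0) (M.δ_nonneg 1), single_dotProduct, one_mul,
    pow_mulVec_apply_eq_sum_paths]
  simp only [mul_one]
end

section
/- Let μ be a σ-finite measure on a measurable space Ω, let f_1, …, f_N : Ω → [0,∞) be measurable with ∫ f_i dμ = 1 for all i, let q_1, …, q_N > 0 with Σ_i q_i = 1 and θ_1, …, θ_N > 0 with Σ_i θ_i = 1, and let {R_1, …, R_N} be a measurable partition of Ω such that ω ∈ R_i implies q_i·f_i(ω) ≥ q_j·f_j(ω) for all j (a MAP partition). Define P_error = Σ_{i=1}^N θ_i · Σ_{j≠i} ∫_{R_j} f_i dμ and the pairwise Bhattacharyya coefficients B_{ij} = ∫ √(f_i·f_j) dμ. Then P_error ≥ (1/2)·max_{k ∈ {1,…,N}} Σ_{i≠k} min{θ_i, θ_k}·B_{ik}². -/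
/-!
Pointwise `√(f_i f_k) = √(min(f_i, f_k)) · √(max(f_i, f_k))`, so Cauchy–Schwarz gives
`B_{ik}² ≤ ∫ min(f_i, f_k) · ∫ max(f_i, f_k) ≤ 2 ∫ min(f_i, f_k)`. On the other hand, splitting
`∫ min(f_i, f_k)` along the decision regions bounds it by the mass of `f_k` on `R_i` plus the mass
of `f_i` off `R_i`, i.e. by the two error terms of hypotheses `k` and `i`. Weighting by
`min(θ_i, θ_k)` and summing over `i ≠ k` uses each error term at most once.
-/

open MeasureTheory Finset

section CauchySchwarz

variable {α : Type*} [MeasurableSpace α] {μ : Measure α}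

lemma memLp_two_sqrt_of_integrable {g : α → ℝ} (hg0 : 0 ≤ g) (hg : Integrable g μ) :
    MemLp (fun x => √(g x)) 2 μ :=
  (memLp_two_iff_integrable_sq (Real.continuous_sqrt.comp_aestronglyMeasurable
    hg.aestronglyMeasurable)).2 (hg.congr (ae_of_all _ fun x => (Real.sq_sqrt (hg0 x)).symm))

lemma sq_integral_sqrt_mul_le_integral_mul_integral_s12 {g h : α → ℝ} (hg0 : 0 ≤ g) (hh0 : 0 ≤ h)
    (hg : Integrable g μ) (hh : Integrable h μ) :
    (∫ x, √(g x * h x) ∂μ) ^ 2 ≤ (∫ x, g x ∂μ) * ∫ x, h x ∂μ := by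
  have hpq : (2 : ℝ).HolderConjugate 2 := by rw [Real.holderConjugate_iff]; norm_num
  have holder := integral_mul_le_Lp_mul_Lq_of_nonneg (μ := μ) hpq
    (ae_of_all _ fun x => Real.sqrt_nonneg (g x)) (ae_of_all _ fun x => Real.sqrt_nonneg (h x))
    (by simpa using memLp_two_sqrt_of_integrable hg0 hg)
    (by simpa using memLp_two_sqrt_of_integrable hh0 hh)
  have sq_sqrt_rpow : ∀ y : ℝ, 0 ≤ y → √y ^ (2 : ℝ) = y := fun y hy => by
    rw [Real.rpow_two, Real.sq_sqrt hy]
  simp only [← Real.sqrt_mul (hg0 _), sq_sqrt_rpow _ (hg0 _), sq_sqrt_rpow _ (hh0 _),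
    ← Real.sqrt_eq_rpow] at holder
  have hG : 0 ≤ ∫ x, g x ∂μ := integral_nonneg hg0
  have hH : 0 ≤ ∫ x, h x ∂μ := integral_nonneg hh0
  calc (∫ x, √(g x * h x) ∂μ) ^ 2
      ≤ (√(∫ x, g x ∂μ) * √(∫ x, h x ∂μ)) ^ 2 :=
        pow_le_pow_left₀ (integral_nonneg fun x => Real.sqrt_nonneg _) holder 2
    _ = (∫ x, g x ∂μ) * ∫ x, h x ∂μ := by rw [mul_pow, Real.sq_sqrt hG, Real.sq_sqrt hH]

lemma sq_integral_sqrt_mul_le_integral_min_mul {a b : α → ℝ} (ha0 : 0 ≤ a) (hb0 : 0 ≤ b)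
    (ha : Integrable a μ) (hb : Integrable b μ) :
    (∫ x, √(a x * b x) ∂μ) ^ 2 ≤ (∫ x, min (a x) (b x) ∂μ) * (∫ x, a x ∂μ + ∫ x, b x ∂μ) := by
  have hmin : Integrable (fun x => min (a x) (b x)) μ := ha.inf hb
  have hmax : Integrable (fun x => max (a x) (b x)) μ := ha.sup hb
  have cs := sq_integral_sqrt_mul_le_integral_mul_integral_s12 (μ := μ)
    (fun x => le_min (ha0 x) (hb0 x)) (fun x => (ha0 x).trans (le_max_left _ _)) hmin hmax
  simp only [min_mul_max] at cs
  have max_eq : ∫ x, max (a x) (b x) ∂μ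
      = ∫ x, a x ∂μ + ∫ x, b x ∂μ - ∫ x, min (a x) (b x) ∂μ :=
    calc ∫ x, max (a x) (b x) ∂μ = ∫ x, a x + b x - min (a x) (b x) ∂μ :=
          integral_congr_ae (ae_of_all _ fun x => by linarith [min_add_max (a x) (b x)])
      _ = _ := by rw [integral_sub (f := fun x => a x + b x) (ha.add hb) hmin, integral_add ha hb]
  have hm : 0 ≤ ∫ x, min (a x) (b x) ∂μ := integral_nonneg fun x => le_min (ha0 x) (hb0 x)
  nlinarith

end CauchySchwarz

lemma integral_min_le_setIntegral_add_sum_setIntegral_erase {α ι : Type*} [MeasurableSpace α]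
    {μ : Measure α} [Fintype ι] [DecidableEq ι] {R : ι → Set α} (hRm : ∀ i, MeasurableSet (R i))
    (hdisj : Pairwise (Function.onFun Disjoint R)) (hcover : ⋃ i, R i = Set.univ)
    {g h : α → ℝ} (hg : Integrable g μ) (hh : Integrable h μ) (i : ι) :
    ∫ x, min (g x) (h x) ∂μ ≤ ∫ x in R i, h x ∂μ + ∑ j ∈ univ.erase i, ∫ x in R j, g x ∂μ := by
  have hmin : Integrable (fun x => min (g x) (h x)) μ := hg.inf hh
  rw [← setIntegral_univ, ← hcover, integral_iUnion_fintype hRm hdisj fun _ => hmin.integrableOn,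
    ← add_sum_erase _ _ (mem_univ i)]
  exact add_le_add
    (setIntegral_mono hmin.integrableOn hh.integrableOn fun x => min_le_right _ _)
    (sum_le_sum fun j _ => setIntegral_mono hmin.integrableOn hg.integrableOn
      fun x => min_le_left _ _)

lemma min_mul_add_le_mul_add_mul {s t x y : ℝ} (hx : 0 ≤ x) (hy : 0 ≤ y) :
    min s t * (x + y) ≤ t * x + s * y := by
  nlinarith [min_le_left s t, min_le_right s t]

theorem MAP_error_lower_bound_multi_general
    {Ω : Type*} [MeasurableSpace Ω] (μ : Measure Ω)
    (N : ℕ)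
    (f : Fin N → Ω → ℝ) (hf0 : ∀ i ω, 0 ≤ f i ω)
    (hfi : ∀ i, ∫ ω, f i ω ∂μ = 1)
    (θ : Fin N → ℝ) (hθpos : ∀ i, 0 < θ i)
    (R : Fin N → Set Ω) (hRm : ∀ i, MeasurableSet (R i))
    (hdisj : Pairwise (Function.onFun Disjoint R)) (hcover : ⋃ i, R i = Set.univ) :
    ∀ k : Fin N,
      (1 / 2) * ∑ i ∈ Finset.univ.erase k,
          min (θ i) (θ k) * (∫ ω, Real.sqrt (f i ω * f k ω) ∂μ) ^ 2
        ≤ ∑ i, θ i * ∑ j ∈ Finset.univ.erase i, ∫ ω in R j, f i ω ∂μ := by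
  intro k
  have hint : ∀ i, Integrable (f i) μ := fun i => .of_integral_ne_zero (by simp [hfi i])
  have pairwise_bound : ∀ i, (1 / 2) * (min (θ i) (θ k) * (∫ ω, √(f i ω * f k ω) ∂μ) ^ 2)
      ≤ θ k * ∫ ω in R i, f k ω ∂μ + θ i * ∑ j ∈ univ.erase i, ∫ ω in R j, f i ω ∂μ := by
    intro i
    have bhattacharyya := sq_integral_sqrt_mul_le_integral_min_mul (hf0 i) (hf0 k) (hint i) (hint k)
    rw [hfi, hfi] at bhattacharyya
    have hθ : 0 ≤ min (θ i) (θ k) := le_min (hθpos i).le (hθpos k).le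
    calc (1 / 2) * (min (θ i) (θ k) * (∫ ω, √(f i ω * f k ω) ∂μ) ^ 2)
        ≤ min (θ i) (θ k) * ∫ ω, min (f i ω) (f k ω) ∂μ := by nlinarith
      _ ≤ min (θ i) (θ k) * (∫ ω in R i, f k ω ∂μ + ∑ j ∈ univ.erase i, ∫ ω in R j, f i ω ∂μ) :=
        mul_le_mul_of_nonneg_left
          (integral_min_le_setIntegral_add_sum_setIntegral_erase hRm hdisj hcover
            (hint i) (hint k) i) hθ
      _ ≤ _ := min_mul_add_le_mul_add_mul (setIntegral_nonneg (hRm i) fun ω _ => hf0 k ω)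
          (sum_nonneg fun j _ => setIntegral_nonneg (hRm j) fun ω _ => hf0 i ω)
  calc (1 / 2) * ∑ i ∈ univ.erase k, min (θ i) (θ k) * (∫ ω, √(f i ω * f k ω) ∂μ) ^ 2
      ≤ ∑ i ∈ univ.erase k,
          (θ k * ∫ ω in R i, f k ω ∂μ + θ i * ∑ j ∈ univ.erase i, ∫ ω in R j, f i ω ∂μ) := by
        rw [mul_sum]; exact sum_le_sum fun i _ => pairwise_bound i
    _ = θ k * ∑ j ∈ univ.erase k, ∫ ω in R j, f k ω ∂μ
          + ∑ i ∈ univ.erase k, θ i * ∑ j ∈ univ.erase i, ∫ ω in R j, f i ω ∂μ := by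
        rw [sum_add_distrib, mul_sum]
    _ = _ := add_sum_erase _ (fun i => θ i * ∑ j ∈ univ.erase i, ∫ ω in R j, f i ω ∂μ)
        (mem_univ k)

/-- **Lower bound on the probability of error for the MAP rule with `N` hypotheses.**
For densities `f i` w.r.t. a σ-finite measure `μ`, estimated priors `q i`
and true priors `θ i` (positive, summing to one), and a measurable MAP partition
`R i` of `Ω`, the probability of error
`P_error = Σ_i θ_i Σ_{j ≠ i} ∫_{R_j} f_i dμ` is at least
`(1/2)·max_k Σ_{i ≠ k} min{θ_i, θ_k}·B_{ik}²`, where `B_{ik} = ∫ √(f_i·f_k) dμ`. -/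
theorem MAP_error_lower_bound_multi
    {Ω : Type*} [MeasurableSpace Ω] (μ : Measure Ω) [SigmaFinite μ]
    (N : ℕ) (hN : 0 < N)
    (f : Fin N → Ω → ℝ) (hf : ∀ i, Measurable (f i)) (hf0 : ∀ i ω, 0 ≤ f i ω)
    (hfi : ∀ i, ∫ ω, f i ω ∂μ = 1)
    (q θ : Fin N → ℝ) (hq : ∀ i, 0 < q i) (hθpos : ∀ i, 0 < θ i)
    (hqs : ∑ i, q i = 1) (hθs : ∑ i, θ i = 1)
    (R : Fin N → Set Ω) (hRm : ∀ i, MeasurableSet (R i))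
    (hdisj : Pairwise (Function.onFun Disjoint R)) (hcover : ⋃ i, R i = Set.univ)
    (hMAP : ∀ i, ∀ ω ∈ R i, ∀ j, q j * f j ω ≤ q i * f i ω) :
    ∀ k : Fin N,
      (1 / 2) * ∑ i ∈ Finset.univ.erase k,
          min (θ i) (θ k) * (∫ ω, Real.sqrt (f i ω * f k ω) ∂μ) ^ 2
        ≤ ∑ i, θ i * ∑ j ∈ Finset.univ.erase i, ∫ ω in R j, f i ω ∂μ :=
  MAP_error_lower_bound_multi_general μ N f hf0 hfi θ hθpos R hRm hdisj hcover
end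

section
/- Let μ be a σ-finite measure on a measurable space Ω, let f_1, …, f_N : Ω → [0,∞) be measurable with ∫ f_i dμ = 1 for all i, let q_1, …, q_N > 0 with Σ_i q_i = 1 and θ_1, …, θ_N > 0 with Σ_i θ_i = 1, and let {R_1, …, R_N} be a measurable partition of Ω such that ω ∈ R_i implies q_i·f_i(ω) ≥ q_j·f_j(ω) for all j (a MAP partition). Define P_error = Σ_{i=1}^N θ_i · Σ_{j≠i} ∫_{R_j} f_i dμ and the pairwise Bhattacharyya coefficients B_{ij} = ∫ √(f_i·f_j) dμ. Then P_error ≤ max_i (θ_i/q_i) · Σ_{i<j} √(q_i·q_j)·B_{ij}. -/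
/-!
On `R j` the MAP rule gives `q i f i ≤ q j f j`, hence `q i f i ≤ √(q i q j) √(f i f j)`; with
`θ i ≤ M q i` for `M = max_k θ k / q k` this bounds the error term `θ i ∫_{R j} f i` by
`M √(q i q j) ∫_{R j} √(f i f j)`. The terms for `(i, j)` and `(j, i)` integrate the same
`√(f i f j)` over the disjoint sets `R j` and `R i`, so together they are at most
`M √(q i q j) B i j`.
-/

open MeasureTheory

lemma Finset.sum_sum_erase_eq_sum_lt_add_swap {ι M : Type*} [Fintype ι] [LinearOrder ι]
    [AddCommMonoid M] (g : ι → ι → M) :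
    ∑ i, ∑ j ∈ univ.erase i, g i j
      = ∑ p ∈ univ.filter (fun p : ι × ι => p.1 < p.2), (g p.1 p.2 + g p.2 p.1) := by
  have hswap : ∑ p : ι × ι, (if p.2 < p.1 then g p.1 p.2 else 0)
      = ∑ p : ι × ι, (if p.1 < p.2 then g p.2 p.1 else 0) :=
    Fintype.sum_equiv (Equiv.prodComm ι ι) _ _ fun _ => rfl
  calc ∑ i, ∑ j ∈ univ.erase i, g i j
      = ∑ p : ι × ι, (if p.1 ≠ p.2 then g p.1 p.2 else 0) := by
        rw [Fintype.sum_prod_type]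
        refine sum_congr rfl fun i _ => ?_
        rw [← sum_filter, filter_ne]
    _ = ∑ p : ι × ι, ((if p.1 < p.2 then g p.1 p.2 else 0)
          + if p.2 < p.1 then g p.1 p.2 else 0) := by
        refine sum_congr rfl fun p _ => ?_
        rcases lt_trichotomy p.1 p.2 with h | h | h
        · simp [h, h.ne, h.not_gt]
        · simp [h]
        · simp [h, h.ne', h.not_gt]
    _ = _ := by
        rw [sum_add_distrib, hswap, ← sum_add_distrib, sum_filter]
        simp only [ite_add_zero]

lemma Real.le_ciSup_div_mul {ι : Type*} [Finite ι] (θ : ι → ℝ) {q : ι → ℝ} {i : ι}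
    (hq : 0 < q i) : θ i ≤ (⨆ k, θ k / q k) * q i :=
  (div_le_iff₀ hq).mp <| le_ciSup (Set.finite_range fun k => θ k / q k).bddAbove i

lemma Real.le_sqrt_mul_of_le {x y : ℝ} (hx : 0 ≤ x) (hxy : x ≤ y) : x ≤ √(x * y) :=
  Real.le_sqrt_of_sq_le (by nlinarith)

lemma Real.sqrt_mul_le_abs_add_abs (x y : ℝ) : √(x * y) ≤ |x| + |y| :=
  Real.sqrt_le_iff.mpr ⟨by positivity, by
    nlinarith [le_abs_self (x * y), abs_mul x y, abs_nonneg x, abs_nonneg y]⟩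

section

variable {Ω : Type*} [MeasurableSpace Ω] {μ : Measure Ω} {f g : Ω → ℝ}

lemma MeasureTheory.Integrable.sqrt_mul (hf : Integrable f μ) (hg : Integrable g μ) :
    Integrable (fun ω => √(f ω * g ω)) μ := by
  refine (hf.norm.add hg.norm).mono'
    (Real.continuous_sqrt.comp_aestronglyMeasurable
      (hf.aestronglyMeasurable.mul hg.aestronglyMeasurable)) (ae_of_all _ fun ω => ?_)
  rw [Real.norm_of_nonneg (Real.sqrt_nonneg _)]
  exact Real.sqrt_mul_le_abs_add_abs _ _

lemma MeasureTheory.mul_setIntegral_le_sqrt_mul_mul_setIntegral_sqrt {A : Set Ω} {a b : ℝ}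
    (hA : MeasurableSet A) (ha : 0 ≤ a) (hb : 0 ≤ b) (hf0 : ∀ ω ∈ A, 0 ≤ f ω)
    (hf : IntegrableOn f A μ) (hfg : IntegrableOn (fun ω => √(f ω * g ω)) A μ)
    (hle : ∀ ω ∈ A, a * f ω ≤ b * g ω) :
    a * ∫ ω in A, f ω ∂μ ≤ √(a * b) * ∫ ω in A, √(f ω * g ω) ∂μ := by
  have hpointwise : ∀ ω ∈ A, a * f ω ≤ √(a * b) * √(f ω * g ω) := fun ω hω => by
    rw [← Real.sqrt_mul (mul_nonneg ha hb)]
    calc a * f ω ≤ √(a * f ω * (b * g ω)) :=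
          Real.le_sqrt_mul_of_le (mul_nonneg ha (hf0 ω hω)) (hle ω hω)
      _ = √(a * b * (f ω * g ω)) := by ring_nf
  rw [← integral_const_mul, ← integral_const_mul]
  exact setIntegral_mono_on (hf.const_mul a) (hfg.const_mul _) hA hpointwise

lemma MeasureTheory.setIntegral_add_setIntegral_le_integral {A B : Set Ω}
    (hAB : Disjoint A B) (hB : MeasurableSet B) (hf : Integrable f μ) (hf0 : 0 ≤ᵐ[μ] f) :
    ∫ ω in A, f ω ∂μ + ∫ ω in B, f ω ∂μ ≤ ∫ ω, f ω ∂μ := by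
  rw [← setIntegral_union hAB hB hf.integrableOn hf.integrableOn]
  exact setIntegral_le_integral hf hf0

end

theorem MAP_error_upper_bound_multi_general
    {Ω : Type*} [MeasurableSpace Ω] (μ : Measure Ω)
    (N : ℕ)
    (f : Fin N → Ω → ℝ) (hf0 : ∀ i ω, 0 ≤ f i ω)
    (hfi : ∀ i, ∫ ω, f i ω ∂μ = 1)
    (q θ : Fin N → ℝ) (hq : ∀ i, 0 < q i) (hθpos : ∀ i, 0 < θ i)
    (R : Fin N → Set Ω) (hRm : ∀ i, MeasurableSet (R i))
    (hdisj : Pairwise (Function.onFun Disjoint R))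
    (hMAP : ∀ i, ∀ ω ∈ R i, ∀ j, q j * f j ω ≤ q i * f i ω) :
    ∑ i, θ i * ∑ j ∈ Finset.univ.erase i, ∫ ω in R j, f i ω ∂μ
      ≤ (⨆ i, θ i / q i) *
          ∑ p ∈ Finset.univ.filter (fun p : Fin N × Fin N => p.1 < p.2),
            Real.sqrt (q p.1 * q p.2) * ∫ ω, Real.sqrt (f p.1 ω * f p.2 ω) ∂μ := by
  set M := ⨆ i, θ i / q i
  have hint i : Integrable (f i) μ := .of_integral_ne_zero (by simp [hfi])
  have hM0 : 0 ≤ M := Real.iSup_nonneg fun i => (div_pos (hθpos i) (hq i)).le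
  have hB i j := (hint i).sqrt_mul (hint j)
  have hterm i j : θ i * ∫ ω in R j, f i ω ∂μ
      ≤ M * (√(q i * q j) * ∫ ω in R j, √(f i ω * f j ω) ∂μ) := by
    have hsqrt := mul_setIntegral_le_sqrt_mul_mul_setIntegral_sqrt (hRm j) (hq i).le (hq j).le
      (fun ω _ => hf0 i ω) (hint i).integrableOn (hB i j).integrableOn fun ω hω => hMAP j ω hω i
    calc _ ≤ M * q i * ∫ ω in R j, f i ω ∂μ := by
          gcongr
          · exact setIntegral_nonneg (hRm j) fun ω _ => hf0 i ω
          · exact Real.le_ciSup_div_mul θ (hq i)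
      _ = M * (q i * ∫ ω in R j, f i ω ∂μ) := mul_assoc ..
      _ ≤ _ := by gcongr
  have hpair i j (hij : i < j) : √(q i * q j) * ∫ ω in R j, √(f i ω * f j ω) ∂μ
      + √(q j * q i) * ∫ ω in R i, √(f j ω * f i ω) ∂μ
      ≤ √(q i * q j) * ∫ ω, √(f i ω * f j ω) ∂μ := by
    simp only [mul_comm (q j), mul_comm (f j _), ← mul_add]
    exact mul_le_mul_of_nonneg_left (setIntegral_add_setIntegral_le_integral (hdisj hij.ne')
      (hRm i) (hB i j) (ae_of_all _ fun _ => Real.sqrt_nonneg _))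
      (Real.sqrt_nonneg _)
  calc _ = ∑ i, ∑ j ∈ Finset.univ.erase i, θ i * ∫ ω in R j, f i ω ∂μ := by
        simp only [Finset.mul_sum]
    _ ≤ ∑ i, ∑ j ∈ Finset.univ.erase i,
          M * (√(q i * q j) * ∫ ω in R j, √(f i ω * f j ω) ∂μ) :=
        Finset.sum_le_sum fun i _ => Finset.sum_le_sum fun j _ => hterm i j
    _ ≤ _ := by
      simp only [← Finset.mul_sum, Finset.sum_sum_erase_eq_sum_lt_add_swap]
      gcongr with p hp
      exact hpair p.1 p.2 (Finset.mem_filter.mp hp).2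

/-- **Upper bound on the probability of error for the MAP rule with `N` hypotheses.**
For densities `f i` w.r.t. a σ-finite measure `μ`, estimated priors `q i`
and true priors `θ i` (positive, summing to one), and a measurable MAP partition
`R i` of `Ω`, the probability of error
`P_error = Σ_i θ_i Σ_{j ≠ i} ∫_{R_j} f_i dμ` is at most
`max_i (θ_i/q_i) · Σ_{i<j} √(q_i·q_j)·B_{ij}`, where `B_{ij} = ∫ √(f_i·f_j) dμ`. -/
theorem MAP_error_upper_bound_multi
    {Ω : Type*} [MeasurableSpace Ω] (μ : Measure Ω) [SigmaFinite μ]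
    (N : ℕ) (hN : 0 < N)
    (f : Fin N → Ω → ℝ) (hf : ∀ i, Measurable (f i)) (hf0 : ∀ i ω, 0 ≤ f i ω)
    (hfi : ∀ i, ∫ ω, f i ω ∂μ = 1)
    (q θ : Fin N → ℝ) (hq : ∀ i, 0 < q i) (hθpos : ∀ i, 0 < θ i)
    (hqs : ∑ i, q i = 1) (hθs : ∑ i, θ i = 1)
    (R : Fin N → Set Ω) (hRm : ∀ i, MeasurableSet (R i))
    (hdisj : Pairwise (Function.onFun Disjoint R)) (hcover : ⋃ i, R i = Set.univ)
    (hMAP : ∀ i, ∀ ω ∈ R i, ∀ j, q j * f j ω ≤ q i * f i ω) :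
    ∑ i, θ i * ∑ j ∈ Finset.univ.erase i, ∫ ω in R j, f i ω ∂μ
      ≤ (⨆ i, θ i / q i) *
          ∑ p ∈ Finset.univ.filter (fun p : Fin N × Fin N => p.1 < p.2),
            Real.sqrt (q p.1 * q p.2) * ∫ ω, Real.sqrt (f p.1 ω * f p.2 ω) ∂μ :=
  MAP_error_upper_bound_multi_general μ N f hf0 hfi q θ hq hθpos R hRm hdisj hMAP
end
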